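/- Let k be a commutative ring, X a set, and Ω a semigroup, and let j : X → DDF(X,Ω) be the map j(x) = stree(x). Then (DDF(X,Ω), {≺_ω, ≻_ω | ω ∈ Ω}), together with j, is the free dendriform family algebra on X: for any dendriform family algebra (D', {≺'_ω, ≻'_ω | ω ∈ Ω}) over k and any map f : X → D', there is a unique k-linear map f̄ : DDF(X,Ω) → D' such that f̄(T ≺_ω U) = f̄(T) ≺'_ω f̄(U) and f̄(T ≻_ω U) = f̄(T) ≻'_ω f̄(U) for all T, U ∈ DDF(X,Ω) and ω ∈ Ω, and f = f̄ ∘ j. -/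
import Mathlib


/-- An `X`-decorated `Ω`-typed planar binary tree with at least one internal vertex.
`node l x r` has root vertex decorated by `x : X`; a child `none` is a leaf `|`
(its edge carries the adjoined identity type `1 ∈ Ω¹`), while a child `some (t, α)` is a
nonempty subtree `t` whose internal edge to the root is typed by `α ∈ Ω`. -/
inductive PBT (X Ω : Type) : Type where
  | node : Option (PBT X Ω × Ω) → X → Option (PBT X Ω × Ω) → PBT X Ω

namespace PBT

variable {X Ω : Type}

/-- The single-vertex tree `stree x = | ∨_{x,(1,1)} |`. -/
def stree (x : X) : PBT X Ω := .node none x none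

variable [Semigroup Ω] (k : Type) [CommRing k]

mutual
/-- `T ≺_ω U` on trees (Definition of the dendriform family operations):
for `T = T^l ∨_{x,(α₁,α₂)} T^r`, `T ≺_ω U = T^l ∨_{x,(α₁,α₂ω)} (T^r ≺_ω U + T^r ≻_{α₂} U)`,
using the conventions `| ≺_ω U = 0`, `| ≻₁ U = U` when `T^r = |`. -/
noncomputable def tprec : PBT X Ω → Ω → PBT X Ω → (PBT X Ω →₀ k)
  | .node tl x none, ω, U => Finsupp.single (.node tl x (some (U, ω))) 1
  | .node tl x (some (t, α)), ω, U =>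
      Finsupp.mapDomain (fun s => PBT.node tl x (some (s, α * ω)))
        (tprec t ω U + tsucc t α U)
  termination_by T _ U => sizeOf T + sizeOf U
  decreasing_by all_goals (simp_wf; omega)

/-- `T ≻_ω U` on trees: for `U = U^l ∨_{y,(β₁,β₂)} U^r`,
`T ≻_ω U = (T ≺_{β₁} U^l + T ≻_ω U^l) ∨_{y,(ωβ₁,β₂)} U^r`,
using the conventions `T ≻_ω | = 0`, `T ≺₁ | = T` when `U^l = |`. -/
noncomputable def tsucc : PBT X Ω → Ω → PBT X Ω → (PBT X Ω →₀ k)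
  | T, ω, .node none y ur => Finsupp.single (.node (some (T, ω)) y ur) 1
  | T, ω, .node (some (u, β)) y ur =>
      Finsupp.mapDomain (fun s => PBT.node (some (s, ω * β)) y ur)
        (tprec T β u + tsucc T ω u)
  termination_by T _ U => sizeOf T + sizeOf U
  decreasing_by all_goals (simp_wf; omega)
end

/-- The bilinear extension of `≺_ω` to the free module `DDF(X,Ω) = PBT X Ω →₀ k`. -/
noncomputable def dprec (ω : Ω) (a b : PBT X Ω →₀ k) : PBT X Ω →₀ k :=
  a.sum fun T ca => b.sum fun U cb => (ca * cb) • tprec k T ω U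

/-- The bilinear extension of `≻_ω` to the free module `DDF(X,Ω) = PBT X Ω →₀ k`. -/
noncomputable def dsucc (ω : Ω) (a b : PBT X Ω →₀ k) : PBT X Ω →₀ k :=
  a.sum fun T ca => b.sum fun U cb => (ca * cb) • tsucc k T ω U

end PBT


namespace DDFAux

open PBT

variable {X Ω : Type} {k : Type} [CommRing k]
  {D' : Type} [AddCommGroup D'] [Module k D']

/-- The evaluation of a single tree in `D'`. -/
def phi (prec' succ' : Ω → D' →ₗ[k] D' →ₗ[k] D') (f : X → D') : PBT X Ω → D'
  | .node none x none => f x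
  | .node none x (some (r, _β)) => prec' _β (f x) (phi prec' succ' f r)
  | .node (some (l, α)) x none => succ' α (phi prec' succ' f l) (f x)
  | .node (some (l, α)) x (some (r, _β)) =>
      succ' α (phi prec' succ' f l) (prec' _β (f x) (phi prec' succ' f r))

def lmapL (prec' succ' : Ω → D' →ₗ[k] D' →ₗ[k] D') (f : X → D') :
    Option (PBT X Ω × Ω) → D' →ₗ[k] D'
  | none => LinearMap.id
  | some (l, δ) => succ' δ (phi prec' succ' f l)

def rval (prec' succ' : Ω → D' →ₗ[k] D' →ₗ[k] D') (f : X → D') (x : X) :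
    Option (PBT X Ω × Ω) → D'
  | none => f x
  | some (r, β) => prec' β (f x) (phi prec' succ' f r)

lemma phi_node (prec' succ' : Ω → D' →ₗ[k] D' →ₗ[k] D') (f : X → D')
    (tl : Option (PBT X Ω × Ω)) (x : X) (tr : Option (PBT X Ω × Ω)) :
    phi prec' succ' f (.node tl x tr)
      = lmapL prec' succ' f tl (rval prec' succ' f x tr) := by
  rcases tl with _ | ⟨l, δ⟩ <;> rcases tr with _ | ⟨r, β⟩ <;> rfl

lemma prec_lmapL (prec' succ' : Ω → D' →ₗ[k] D' →ₗ[k] D') (f : X → D')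
    (h2 : ∀ (α β : Ω) (x y z : D'),
      prec' β (succ' α x y) z = succ' α x (prec' β y z))
    (ω : Ω) (tl : Option (PBT X Ω × Ω)) (m z : D') :
    prec' ω (lmapL prec' succ' f tl m) z = lmapL prec' succ' f tl (prec' ω m z) := by
  rcases tl with _ | ⟨l, δ⟩
  · rfl
  · exact h2 δ ω _ m z

variable [Semigroup Ω]

lemma key (prec' succ' : Ω → D' →ₗ[k] D' →ₗ[k] D') (f : X → D')
    (h1 : ∀ (α β : Ω) (x y z : D'),
      prec' β (prec' α x y) z = prec' (α * β) x (prec' β y z + succ' α y z))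
    (h2 : ∀ (α β : Ω) (x y z : D'),
      prec' β (succ' α x y) z = succ' α x (prec' β y z))
    (h3 : ∀ (α β : Ω) (x y z : D'),
      succ' (α * β) (prec' β x y + succ' α x y) z = succ' α x (succ' β y z)) :
    ∀ (n : ℕ) (T U : PBT X Ω) (ω : Ω), sizeOf T + sizeOf U ≤ n →
      Finsupp.linearCombination k (phi prec' succ' f) (tprec (k := k) T ω U)
          = prec' ω (phi prec' succ' f T) (phi prec' succ' f U) ∧
      Finsupp.linearCombination k (phi prec' succ' f) (tsucc (k := k) T ω U)
          = succ' ω (phi prec' succ' f T) (phi prec' succ' f U) := by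
  intro n
  induction n with
  | zero =>
      intro T U ω h
      rcases T with ⟨tl, x, tr⟩
      simp at h
  | succ n ih =>
      intro T U ω h
      constructor
      · rcases T with ⟨tl, x, tr⟩
        rcases tr with _ | ⟨t, α⟩
        · rw [tprec, Finsupp.linearCombination_single, one_smul, phi_node, phi_node]
          simp only [rval]
          exact (prec_lmapL prec' succ' f h2 ω tl (f x) _).symm
        · have ht : sizeOf t + sizeOf U ≤ n := by
            simp at h; omega
          rw [tprec, Finsupp.linearCombination_mapDomain]
          have hcomp : (phi prec' succ' f) ∘ (fun s => PBT.node tl x (some (s, α * ω)))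
              = ⇑((lmapL prec' succ' f tl).comp ((prec' (α * ω)) (f x)))
                  ∘ (phi prec' succ' f) := by
            funext s
            simp only [Function.comp_apply, LinearMap.comp_apply, phi_node, rval]
          rw [hcomp, ← Finsupp.apply_linearCombination, map_add,
            (ih t U ω ht).1, (ih t U α ht).2, LinearMap.comp_apply,
            ← h1 α ω (f x) (phi prec' succ' f t) (phi prec' succ' f U),
            phi_node]
          simp only [rval]
          exact (prec_lmapL prec' succ' f h2 ω tl _ _).symm
      · rcases U with ⟨ul, y, ur⟩
        rcases ul with _ | ⟨u, β⟩
        · rw [tsucc, Finsupp.linearCombination_single, one_smul, phi_node, phi_node]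
          rfl
        · have hu : sizeOf T + sizeOf u ≤ n := by
            simp at h; omega
          rw [tsucc, Finsupp.linearCombination_mapDomain]
          have hcomp : (phi prec' succ' f) ∘ (fun s => PBT.node (some (s, ω * β)) y ur)
              = ⇑((succ' (ω * β)).flip (rval prec' succ' f y ur)) ∘ (phi prec' succ' f) := by
            funext s
            simp only [Function.comp_apply, LinearMap.flip_apply, phi_node]
            rfl
          rw [hcomp, ← Finsupp.apply_linearCombination, map_add,
            (ih T u β hu).1, (ih T u ω hu).2, LinearMap.flip_apply,
            h3 ω β (phi prec' succ' f T) (phi prec' succ' f u) (rval prec' succ' f y ur),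
            phi_node]
          rfl

omit [Semigroup Ω] in
lemma bilin (B : D' →ₗ[k] D' →ₗ[k] D') (g : PBT X Ω → D') (a b : PBT X Ω →₀ k) :
    B (Finsupp.linearCombination k g a) (Finsupp.linearCombination k g b)
      = a.sum fun T ca => b.sum fun U cb => (ca * cb) • B (g T) (g U) := by
  simp only [Finsupp.linearCombination_apply, Finsupp.sum, map_sum,
    LinearMap.sum_apply, map_smul, LinearMap.smul_apply, LinearMap.map_smul₂,
    Finset.smul_sum, smul_smul]
  rw [Finset.sum_comm]
  exact Finset.sum_congr rfl fun T _ => Finset.sum_congr rfl fun U _ => by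
    rw [mul_comm]

lemma dprec_single (ω : Ω) (T U : PBT X Ω) :
    dprec k ω (Finsupp.single T 1) (Finsupp.single U 1) = tprec k T ω U := by
  simp [dprec, Finsupp.sum_single_index]

lemma dsucc_single (ω : Ω) (T U : PBT X Ω) :
    dsucc k ω (Finsupp.single T 1) (Finsupp.single U 1) = tsucc k T ω U := by
  simp [dsucc, Finsupp.sum_single_index]

lemma uniq_aux (prec' succ' : Ω → D' →ₗ[k] D' →ₗ[k] D') (f : X → D')
    (h2 : ∀ (α β : Ω) (x y z : D'),
      prec' β (succ' α x y) z = succ' α x (prec' β y z))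
    (g : (PBT X Ω →₀ k) →ₗ[k] D')
    (hp : ∀ (ω : Ω) (a b : PBT X Ω →₀ k),
        g (dprec k ω a b) = prec' ω (g a) (g b))
    (hs : ∀ (ω : Ω) (a b : PBT X Ω →₀ k),
        g (dsucc k ω a b) = succ' ω (g a) (g b))
    (hj : ∀ x : X, g (Finsupp.single (stree x) (1 : k)) = f x) :
    ∀ (n : ℕ) (T : PBT X Ω), sizeOf T ≤ n →
      g (Finsupp.single T 1) = phi prec' succ' f T := by
  intro n
  induction n with
  | zero =>
      intro T h
      rcases T with ⟨tl, x, tr⟩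
      simp at h
  | succ n ih =>
      intro T h
      rcases T with ⟨tl, x, tr⟩
      rcases tr with _ | ⟨r, β⟩
      · rcases tl with _ | ⟨l, α⟩
        · exact hj x
        · have h1 : sizeOf l ≤ n := by simp at h; omega
          have h2' : sizeOf (PBT.node (none : Option (PBT X Ω × Ω)) x none) ≤ n := by
            simp at h ⊢; omega
          have : Finsupp.single (PBT.node (some (l, α)) x none) (1 : k)
              = dsucc k α (Finsupp.single l 1)
                  (Finsupp.single (PBT.node none x none) 1) := by
            rw [dsucc_single, tsucc]
          rw [this, hs, ih l h1, ih _ h2']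
          rfl
      · have h1 : sizeOf r ≤ n := by
          rcases tl with _ | ⟨l, α⟩ <;> simp at h <;> omega
        have h2' : sizeOf (PBT.node tl x none) ≤ n := by
          rcases tl with _ | ⟨l, α⟩ <;> simp at h ⊢ <;> omega
        have : Finsupp.single (PBT.node tl x (some (r, β))) (1 : k)
            = dprec k β (Finsupp.single (PBT.node tl x none) 1)
                (Finsupp.single r 1) := by
          rw [dprec_single, tprec]
        rw [this, hp, ih _ h2', ih r h1, phi_node, phi_node]
        simp only [rval]
        exact prec_lmapL prec' succ' f h2 β tl (f x) _

end DDFAux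

open PBT in
/-- `DDF(X,Ω)`, together with `j : x ↦ stree x`, is the free dendriform
family algebra on `X`: for every dendriform family algebra `(D', {≺'_ω, ≻'_ω})` over `k`
and every map `f : X → D'` there is a unique `k`-linear map `f̄ : DDF(X,Ω) → D'`
respecting the operations and satisfying `f̄ ∘ j = f`. -/
theorem DDF_free_dendriformFamily {X Ω : Type} [Semigroup Ω] (k : Type) [CommRing k]
    {D' : Type} [AddCommGroup D'] [Module k D']
    (prec' succ' : Ω → D' →ₗ[k] D' →ₗ[k] D')
    (h1 : ∀ (α β : Ω) (x y z : D'),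
      prec' β (prec' α x y) z = prec' (α * β) x (prec' β y z + succ' α y z))
    (h2 : ∀ (α β : Ω) (x y z : D'),
      prec' β (succ' α x y) z = succ' α x (prec' β y z))
    (h3 : ∀ (α β : Ω) (x y z : D'),
      succ' (α * β) (prec' β x y + succ' α x y) z = succ' α x (succ' β y z))
    (f : X → D') :
    ∃! fbar : (PBT X Ω →₀ k) →ₗ[k] D',
      (∀ (ω : Ω) (a b : PBT X Ω →₀ k),
        fbar (dprec k ω a b) = prec' ω (fbar a) (fbar b)) ∧
      (∀ (ω : Ω) (a b : PBT X Ω →₀ k),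
        fbar (dsucc k ω a b) = succ' ω (fbar a) (fbar b)) ∧
      (∀ x : X, fbar (Finsupp.single (stree x) (1 : k)) = f x) := by
  refine ⟨Finsupp.linearCombination k (DDFAux.phi prec' succ' f), ⟨?_, ?_, ?_⟩, ?_⟩
  · intro ω a b
    rw [dprec, map_finsuppSum, DDFAux.bilin (prec' ω) (DDFAux.phi prec' succ' f) a b]
    refine Finsupp.sum_congr fun T _ => ?_
    rw [map_finsuppSum]
    refine Finsupp.sum_congr fun U _ => ?_
    rw [map_smul,
      (DDFAux.key prec' succ' f h1 h2 h3 (sizeOf T + sizeOf U) T U ω le_rfl).1]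
  · intro ω a b
    rw [dsucc, map_finsuppSum, DDFAux.bilin (succ' ω) (DDFAux.phi prec' succ' f) a b]
    refine Finsupp.sum_congr fun T _ => ?_
    rw [map_finsuppSum]
    refine Finsupp.sum_congr fun U _ => ?_
    rw [map_smul,
      (DDFAux.key prec' succ' f h1 h2 h3 (sizeOf T + sizeOf U) T U ω le_rfl).2]
  · intro x
    rw [Finsupp.linearCombination_single, one_smul]
    rfl
  · rintro g ⟨hp, hs, hj⟩
    refine Finsupp.lhom_ext fun T c => ?_
    have hc : (Finsupp.single T c : PBT X Ω →₀ k) = c • Finsupp.single T 1 := by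
      rw [Finsupp.smul_single, smul_eq_mul, mul_one]
    rw [hc, map_smul, map_smul,
      DDFAux.uniq_aux prec' succ' f h2 g hp hs hj (sizeOf T) T le_rfl,
      Finsupp.linearCombination_single, one_smul]
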